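/- arXiv:2507.06105 — 2 statements merged into one kernel-verified Lean document; each statement's English description precedes it below -/
import Mathlib

section
/- Let C₀, …, C_n be C*-algebras with self-adjoint subspaces E_k ⊆ C_k (0 ≤ k ≤ n), let ε₁, …, ε_n > 0 satisfy ∑_{k=1}^n ε_k ≤ 1, and for 1 ≤ k ≤ n let ψ_k : E_{k−1} → E_k be an ε_k-morphism with ψ_k(E_{k−1})·ψ_k(E_{k−1}) ⊆ E_k. Then the composition ψ_n⋯ψ₂ψ₁ : E₀ → E_n is an ε-morphism with ε = e²·∑_{k=1}^n ε_k (in particular its norm is at most 1 + e²∑_{k=1}^n ε_k, it satisfies ‖ψ_n⋯ψ₁(xy) − ψ_n⋯ψ₁(x)·ψ_n⋯ψ₁(y)‖ ≤ e²(∑_{k=1}^n ε_k)‖x‖‖y‖ whenever x, y, xy ∈ E₀, and it is self-adjoint). -/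
/-- `ψ : E → C₁` (with range inside `F ⊆ C₁`) is an `ε`-morphism: it is bounded with norm
at most `1 + ε`, approximately multiplicative with defect `ε`, and self-adjoint. -/
def IsEpsMorphism {C D : Type*} [NonUnitalNormedRing C] [StarRing C] [NormedSpace ℂ C]
    [NonUnitalNormedRing D] [StarRing D] [NormedSpace ℂ D]
    (E : Submodule ℂ C) (F : Submodule ℂ D) (ψ : E →ₗ[ℂ] D) (ε : ℝ) : Prop :=
  (∀ x : E, ψ x ∈ F) ∧
  (∀ x : E, ‖ψ x‖ ≤ (1 + ε) * ‖(x : C)‖) ∧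
  (∀ (x y : E) (h : (x : C) * (y : C) ∈ E),
      ‖ψ ⟨(x : C) * (y : C), h⟩ - ψ x * ψ y‖ ≤ ε * ‖(x : C)‖ * ‖(y : C)‖) ∧
  (∀ (x : E) (h : star (x : C) ∈ E), ψ ⟨star (x : C), h⟩ = star (ψ x))

/-- The composition `ψₙ ∘ ⋯ ∘ ψ₂ ∘ ψ₁ : E₀ → Eₙ` of a chain of maps `ψₖ₊₁ : Eₖ → Eₖ₊₁`
(so `compChain ψ n` is the paper's `ψₙ ⋯ ψ₂ ψ₁`). -/
def compChain {C : ℕ → Type*} [∀ n, NonUnitalNormedRing (C n)] [∀ n, NormedSpace ℂ (C n)]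
    (E : ∀ n, Submodule ℂ (C n)) (ψ : ∀ n, E n →ₗ[ℂ] E (n + 1)) :
    ∀ n, E 0 →ₗ[ℂ] E n
  | 0 => LinearMap.id
  | n + 1 => (ψ n).comp (compChain E ψ n)

set_option maxHeartbeats 1600000 in
/-- If `ψₖ : Eₖ₋₁ → Eₖ` are `εₖ`-morphisms (`1 ≤ k ≤ n`) with
`ψₖ(Eₖ₋₁)·ψₖ(Eₖ₋₁) ⊆ Eₖ` and `∑ₖ₌₁ⁿ εₖ ≤ 1`, then `ψₙ ⋯ ψ₂ ψ₁ : E₀ → Eₙ` is an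
`ε`-morphism with `ε = e² ∑ₖ₌₁ⁿ εₖ`.  Here `ψ k : E k → E (k+1)` plays the role of the
paper's `ψₖ₊₁`, with defect `ε (k+1)`. -/
theorem eps_morphism_comp_chain
    {C : ℕ → Type*} [∀ n, NonUnitalNormedRing (C n)] [∀ n, StarRing (C n)]
    [∀ n, CStarRing (C n)] [∀ n, NormedSpace ℂ (C n)] [∀ n, StarModule ℂ (C n)]
    (E : ∀ n, Submodule ℂ (C n)) (hEsa : ∀ n, ∀ x ∈ E n, star x ∈ E n)
    (ε : ℕ → ℝ) (hε : ∀ k, 1 ≤ k → 0 < ε k)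
    (ψ : ∀ n, E n →ₗ[ℂ] E (n + 1))
    (hψ : ∀ k, IsEpsMorphism (E k) (E (k + 1)) ((E (k + 1)).subtype.comp (ψ k)) (ε (k + 1)))
    (hprod : ∀ k, ∀ x y : E k, ((ψ k x : C (k + 1)) * (ψ k y : C (k + 1))) ∈ E (k + 1))
    (n : ℕ) (hsum : ∑ k ∈ Finset.range n, ε (k + 1) ≤ 1) :
    IsEpsMorphism (E 0) (E n) ((E n).subtype.comp (compChain E ψ n))
      (Real.exp 2 * ∑ k ∈ Finset.range n, ε (k + 1)) := by
  classical
  set S : ℕ → ℝ := fun m => ∑ k ∈ Finset.range m, ε (k + 1) with hSdef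
  set P : ℕ → ℝ := fun m => ∏ k ∈ Finset.range m, (1 + ε (k + 1)) with hPdef
  have hεpos : ∀ k : ℕ, 0 < ε (k + 1) := fun k => hε (k + 1) (Nat.le_add_left 1 k)
  have hSnn : ∀ m, 0 ≤ S m := fun m => Finset.sum_nonneg fun k _ => (hεpos k).le
  have hP1 : ∀ m, 1 ≤ P m := by
    intro m
    show (1:ℝ) ≤ ∏ k ∈ Finset.range m, (1 + ε (k + 1))
    calc (1:ℝ) = ∏ _k ∈ Finset.range m, 1 := by simp
      _ ≤ ∏ k ∈ Finset.range m, (1 + ε (k + 1)) :=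
          Finset.prod_le_prod (fun k _ => zero_le_one) (fun k _ => by linarith [hεpos k])
  have hPnn : ∀ m, 0 ≤ P m := fun m => le_trans zero_le_one (hP1 m)
  have key : ∀ m : ℕ,
      (∀ x : E 0, ‖((compChain E ψ m) x : C m)‖ ≤ P m * ‖(x : C 0)‖) ∧
      (∀ (x y : E 0) (h : (x : C 0) * (y : C 0) ∈ E 0),
        ((compChain E ψ m x : C m) * (compChain E ψ m y : C m)) ∈ E m ∧
          ‖((compChain E ψ m) ⟨(x : C 0) * (y : C 0), h⟩ : C m)
              - (compChain E ψ m x : C m) * (compChain E ψ m y : C m)‖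
            ≤ P m ^ 2 * S m * ‖(x : C 0)‖ * ‖(y : C 0)‖) ∧
      (∀ (x : E 0) (h : star (x : C 0) ∈ E 0),
        ((compChain E ψ m) ⟨star (x : C 0), h⟩ : C m)
          = star ((compChain E ψ m) x : C m)) := by
    intro m
    induction m with
    | zero =>
      refine ⟨fun x => by simp [compChain, P], fun x y h => ⟨h, ?_⟩, fun x h => by
        simp [compChain]⟩
      simp [compChain, P, S]
    | succ n ih =>
      obtain ⟨ihA, ihB, ihC⟩ := ih
      obtain ⟨hmem, hnorm, hmul, hstar⟩ := hψ n
      simp only [LinearMap.comp_apply, Submodule.subtype_apply] at hnorm hmul hstar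
      have hPsucc : P (n + 1) = P n * (1 + ε (n + 1)) := Finset.prod_range_succ _ _
      have hSsucc : S (n + 1) = S n + ε (n + 1) := Finset.sum_range_succ _ _
      have hΦsucc : ∀ x : E 0,
          compChain E ψ (n + 1) x = ψ n (compChain E ψ n x) := fun x => rfl
      refine ⟨?_, ?_, ?_⟩
      · intro x
        rw [hΦsucc]
        calc ‖(ψ n (compChain E ψ n x) : C (n + 1))‖
            ≤ (1 + ε (n + 1)) * ‖(compChain E ψ n x : C n)‖ := hnorm _
          _ ≤ (1 + ε (n + 1)) * (P n * ‖(x : C 0)‖) := by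
              have := ihA x
              have h1 : (0:ℝ) ≤ 1 + ε (n + 1) := by linarith [hεpos n]
              exact mul_le_mul_of_nonneg_left this h1
          _ = P (n + 1) * ‖(x : C 0)‖ := by rw [hPsucc]; ring
      · intro x y h
        obtain ⟨hm, hd⟩ := ihB x y h
        set a := compChain E ψ n ⟨(x : C 0) * (y : C 0), h⟩ with ha
        set b := compChain E ψ n x with hb
        set c := compChain E ψ n y with hc
        refine ⟨hprod n b c, ?_⟩
        have hsplit : (ψ n a : C (n + 1)) - (ψ n b : C (n + 1)) * (ψ n c : C (n + 1))
            = (ψ n (a - ⟨(b : C n) * (c : C n), hm⟩) : C (n + 1))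
              + ((ψ n ⟨(b : C n) * (c : C n), hm⟩ : C (n + 1))
                  - (ψ n b : C (n + 1)) * (ψ n c : C (n + 1))) := by
          rw [map_sub]
          push_cast
          rw [sub_add_sub_cancel]
        rw [hΦsucc, hΦsucc, hΦsucc]
        rw [← ha, ← hb, ← hc, hsplit]
        have h1 : ‖(ψ n (a - ⟨(b : C n) * (c : C n), hm⟩) : C (n + 1))‖
            ≤ (1 + ε (n + 1)) * (P n ^ 2 * S n * ‖(x : C 0)‖ * ‖(y : C 0)‖) := by
          refine le_trans (hnorm _) ?_
          have h1' : (0:ℝ) ≤ 1 + ε (n + 1) := by linarith [hεpos n]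
          refine mul_le_mul_of_nonneg_left ?_ h1'
          simpa using hd
        have h2 : ‖(ψ n ⟨(b : C n) * (c : C n), hm⟩ : C (n + 1))
              - (ψ n b : C (n + 1)) * (ψ n c : C (n + 1))‖
            ≤ ε (n + 1) * (P n * ‖(x : C 0)‖) * (P n * ‖(y : C 0)‖) := by
          refine le_trans (hmul b c hm) ?_
          have hbx : ‖(b : C n)‖ ≤ P n * ‖(x : C 0)‖ := ihA x
          have hcy : ‖(c : C n)‖ ≤ P n * ‖(y : C 0)‖ := ihA y
          have hε' := (hεpos n).le
          have hcn : (0:ℝ) ≤ ‖(c : C n)‖ := norm_nonneg _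
          calc ε (n + 1) * ‖(b : C n)‖ * ‖(c : C n)‖
              = ε (n + 1) * (‖(b : C n)‖ * ‖(c : C n)‖) := by ring
            _ ≤ ε (n + 1) * ((P n * ‖(x : C 0)‖) * (P n * ‖(y : C 0)‖)) := by
                refine mul_le_mul_of_nonneg_left ?_ hε'
                exact mul_le_mul hbx hcy hcn (mul_nonneg (hPnn n) (norm_nonneg _))
            _ = ε (n + 1) * (P n * ‖(x : C 0)‖) * (P n * ‖(y : C 0)‖) := by ring
        calc ‖(ψ n (a - ⟨(b : C n) * (c : C n), hm⟩) : C (n + 1))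
              + ((ψ n ⟨(b : C n) * (c : C n), hm⟩ : C (n + 1))
                  - (ψ n b : C (n + 1)) * (ψ n c : C (n + 1)))‖
            ≤ _ + _ := norm_add_le _ _
          _ ≤ (1 + ε (n + 1)) * (P n ^ 2 * S n * ‖(x : C 0)‖ * ‖(y : C 0)‖)
              + ε (n + 1) * (P n * ‖(x : C 0)‖) * (P n * ‖(y : C 0)‖) := add_le_add h1 h2
          _ ≤ P (n + 1) ^ 2 * S (n + 1) * ‖(x : C 0)‖ * ‖(y : C 0)‖ := by
              rw [hPsucc, hSsucc]
              have hε' := (hεpos n).le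
              have hSn := hSnn n
              have hbr : (1 + ε (n + 1)) * S n + ε (n + 1)
                  ≤ (1 + ε (n + 1)) ^ 2 * (S n + ε (n + 1)) := by
                nlinarith [mul_nonneg hε' hSn, mul_nonneg (mul_nonneg hε' hε') hSn,
                  mul_nonneg hε' hε', mul_nonneg (mul_nonneg hε' hε') hε']
              have hXY : (0:ℝ) ≤ ‖(x : C 0)‖ * ‖(y : C 0)‖ :=
                mul_nonneg (norm_nonneg _) (norm_nonneg _)
              calc (1 + ε (n + 1)) * (P n ^ 2 * S n * ‖(x : C 0)‖ * ‖(y : C 0)‖)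
                    + ε (n + 1) * (P n * ‖(x : C 0)‖) * (P n * ‖(y : C 0)‖)
                  = P n ^ 2 * ((1 + ε (n + 1)) * S n + ε (n + 1))
                      * (‖(x : C 0)‖ * ‖(y : C 0)‖) := by ring
                _ ≤ P n ^ 2 * ((1 + ε (n + 1)) ^ 2 * (S n + ε (n + 1)))
                      * (‖(x : C 0)‖ * ‖(y : C 0)‖) := by
                    exact mul_le_mul_of_nonneg_right
                      (mul_le_mul_of_nonneg_left hbr (sq_nonneg _)) hXY
                _ = (P n * (1 + ε (n + 1))) ^ 2 * (S n + ε (n + 1))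
                      * ‖(x : C 0)‖ * ‖(y : C 0)‖ := by ring
      · intro x h
        have hmemstar : star ((compChain E ψ n x : C n)) ∈ E n :=
          hEsa n _ (compChain E ψ n x).2
        have heq : compChain E ψ n ⟨star (x : C 0), h⟩
            = ⟨star ((compChain E ψ n x : C n)), hmemstar⟩ :=
          Subtype.ext (ihC x h)
        rw [hΦsucc, hΦsucc, heq]
        exact hstar (compChain E ψ n x) hmemstar
  obtain ⟨hA, hB, hC⟩ := key n
  have hPexp : P n ≤ Real.exp (S n) := by
    rw [hSdef, Real.exp_sum]
    refine Finset.prod_le_prod (fun k _ => by linarith [hεpos k]) (fun k _ => ?_)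
    linarith [Real.add_one_le_exp (ε (k + 1))]
  have hexpS : Real.exp (S n) ≤ 1 + (Real.exp 1 - 1) * S n := by
    have hcv := convexOn_exp.2 (Set.mem_univ (0:ℝ)) (Set.mem_univ (1:ℝ))
      (by linarith [hSnn n, hsum] : (0:ℝ) ≤ 1 - S n) (hSnn n) (by ring)
    simp only [smul_eq_mul, mul_zero, mul_one, zero_add, Real.exp_zero] at hcv
    linarith
  have he12 : Real.exp 1 - 1 ≤ Real.exp 2 := by
    have := Real.exp_le_exp.mpr (by norm_num : (1:ℝ) ≤ 2)
    linarith
  have hPbound : P n ≤ 1 + Real.exp 2 * S n := by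
    have h1 : (Real.exp 1 - 1) * S n ≤ Real.exp 2 * S n :=
      mul_le_mul_of_nonneg_right he12 (hSnn n)
    linarith
  have hP2 : P n ^ 2 * S n ≤ Real.exp 2 * S n := by
    have h1 : P n ^ 2 ≤ Real.exp (S n) ^ 2 := by
      have := hPnn n
      nlinarith [hPexp, Real.exp_pos (S n)]
    have h2 : Real.exp (S n) ^ 2 = Real.exp (2 * S n) := by
      rw [two_mul, Real.exp_add]; ring
    have h3 : Real.exp (2 * S n) ≤ Real.exp 2 :=
      Real.exp_le_exp.mpr (by linarith [hsum])
    exact mul_le_mul_of_nonneg_right (by linarith) (hSnn n)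
  refine ⟨fun x => (compChain E ψ n x).2, ?_, ?_, ?_⟩
  · intro x
    simp only [LinearMap.comp_apply, Submodule.subtype_apply]
    refine le_trans (hA x) ?_
    exact mul_le_mul_of_nonneg_right hPbound (norm_nonneg _)
  · intro x y h
    simp only [LinearMap.comp_apply, Submodule.subtype_apply]
    refine le_trans (hB x y h).2 ?_
    have hx := norm_nonneg (x : C 0)
    have hy := norm_nonneg (y : C 0)
    have := mul_le_mul_of_nonneg_right (mul_le_mul_of_nonneg_right hP2 hx) hy
    linarith
  · intro x h
    simp only [LinearMap.comp_apply, Submodule.subtype_apply]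
    exact hC x h
end

section
/- Let A be a unital C*-algebra and let (σ_n)_{n≥1} be a sequence in A with 0 ≤ σ_n ≤ 1 for all n and ‖σ_n a − a σ_n‖ → 0 for every a ∈ A. Then for all c, c' ∈ A and all integers m, k ≥ 1, ‖(1−σ_n)^{m+k}·(c c') − (1−σ_n)^m c (1−σ_n)^k c'‖ → 0 as n → ∞. -/
open Filter

/-- If `(σ_n)` is a quasicentral sequence in a unital C*-algebra `A` with
`0 ≤ σ_n ≤ 1`, then for all `c, c' ∈ A` and integers `m, k ≥ 1`,
`‖(1−σ_n)^{m+k}(cc') − (1−σ_n)^m c (1−σ_n)^k c'‖ → 0`. -/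
theorem quasicentral_monomial_mul
    {A : Type*} [NormedRing A] [StarRing A] [CStarRing A] [CompleteSpace A]
    [NormedAlgebra ℂ A] [StarModule ℂ A] [PartialOrder A] [StarOrderedRing A]
    (σ : ℕ → A) (hσ0 : ∀ n, 0 ≤ σ n) (hσ1 : ∀ n, σ n ≤ 1)
    (hqc : ∀ a : A, Tendsto (fun n => ‖σ n * a - a * σ n‖) atTop (nhds 0))
    (c c' : A) (m k : ℕ) (hm : 1 ≤ m) (hk : 1 ≤ k) :
    Tendsto
      (fun n => ‖(1 - σ n) ^ (m + k) * (c * c') - (1 - σ n) ^ m * c * ((1 - σ n) ^ k * c')‖)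
      atTop (nhds 0) := by
  letI : CStarAlgebra A := { }
  set τ : ℕ → A := fun n => 1 - σ n with hτdef
  have hτnorm : ∀ n, ‖τ n‖ ≤ 1 := by
    intro n
    have h0 : (0 : A) ≤ τ n := sub_nonneg.2 (hσ1 n)
    have h1 : τ n ≤ 1 := by simpa [hτdef] using hσ0 n
    exact (CStarAlgebra.norm_le_one_iff_of_nonneg (τ n) h0).2 h1
  have hτpow : ∀ n j, 1 ≤ j → ‖(τ n) ^ j‖ ≤ 1 := by
    intro n j hj
    calc ‖(τ n) ^ j‖ ≤ ‖τ n‖ ^ j := norm_pow_le' _ hj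
      _ ≤ 1 := pow_le_one₀ (norm_nonneg _) (hτnorm n)
  -- commutator with τ equals commutator with σ
  have hcommτ : ∀ n (a : A), ‖τ n * a - a * τ n‖ = ‖σ n * a - a * σ n‖ := by
    intro n a
    have : τ n * a - a * τ n = -(σ n * a - a * σ n) := by
      simp only [hτdef, sub_mul, mul_sub, one_mul, mul_one]; abel
    rw [this, norm_neg]
  -- commutator with powers
  have hcommpow : ∀ j : ℕ, 1 ≤ j → ∀ n (a : A),
      ‖(τ n) ^ j * a - a * (τ n) ^ j‖ ≤ j * ‖σ n * a - a * σ n‖ := by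
    intro j hj
    induction j, hj using Nat.le_induction with
    | base => intro n a; rw [pow_one, hcommτ]; simp
    | succ j hj ih =>
      intro n a
      have key : (τ n) ^ (j + 1) * a - a * (τ n) ^ (j + 1)
          = (τ n) ^ j * (τ n * a - a * τ n) + ((τ n) ^ j * a - a * (τ n) ^ j) * τ n := by
        rw [pow_succ]
        noncomm_ring
      calc ‖(τ n) ^ (j + 1) * a - a * (τ n) ^ (j + 1)‖
          ≤ ‖(τ n) ^ j * (τ n * a - a * τ n)‖ + ‖((τ n) ^ j * a - a * (τ n) ^ j) * τ n‖ := by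
            rw [key]; exact norm_add_le _ _
        _ ≤ ‖(τ n) ^ j‖ * ‖τ n * a - a * τ n‖ + ‖(τ n) ^ j * a - a * (τ n) ^ j‖ * ‖τ n‖ :=
            add_le_add (norm_mul_le _ _) (norm_mul_le _ _)
        _ ≤ 1 * ‖σ n * a - a * σ n‖ + (j * ‖σ n * a - a * σ n‖) * 1 := by
            rw [hcommτ]
            exact add_le_add
              (mul_le_mul_of_nonneg_right (hτpow n j hj) (norm_nonneg _))
              (mul_le_mul (ih n a) (hτnorm n) (norm_nonneg _)
                (by positivity))
        _ = (↑(j + 1)) * ‖σ n * a - a * σ n‖ := by push_cast; ring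
  -- main bound
  have hbound : ∀ n,
      ‖(1 - σ n) ^ (m + k) * (c * c') - (1 - σ n) ^ m * c * ((1 - σ n) ^ k * c')‖
        ≤ k * ‖σ n * c - c * σ n‖ * ‖c'‖ := by
    intro n
    have key : (τ n) ^ (m + k) * (c * c') - (τ n) ^ m * c * ((τ n) ^ k * c')
        = (τ n) ^ m * (((τ n) ^ k * c - c * (τ n) ^ k) * c') := by
      rw [pow_add]; noncomm_ring
    calc ‖(τ n) ^ (m + k) * (c * c') - (τ n) ^ m * c * ((τ n) ^ k * c')‖
        = ‖(τ n) ^ m * (((τ n) ^ k * c - c * (τ n) ^ k) * c')‖ := by rw [key]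
      _ ≤ ‖(τ n) ^ m‖ * (‖(τ n) ^ k * c - c * (τ n) ^ k‖ * ‖c'‖) :=
          (norm_mul_le _ _).trans (by
            exact mul_le_mul_of_nonneg_left (norm_mul_le _ _) (norm_nonneg _))
      _ ≤ 1 * ((k * ‖σ n * c - c * σ n‖) * ‖c'‖) := by
          apply mul_le_mul (hτpow n m hm)
            (mul_le_mul_of_nonneg_right (hcommpow k hk n c) (norm_nonneg _))
            (by positivity) zero_le_one
      _ = k * ‖σ n * c - c * σ n‖ * ‖c'‖ := by ring
  have hlim : Tendsto (fun n => (k : ℝ) * ‖σ n * c - c * σ n‖ * ‖c'‖) atTop (nhds 0) := by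
    have := ((hqc c).const_mul (k : ℝ)).mul_const ‖c'‖
    simpa using this
  exact squeeze_zero (fun n => norm_nonneg _) hbound hlim
end
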